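/- Let d ≥ 2 be an even integer, a ∈ (0,1), and let z, z' ∈ {0,1}^d both have weight exactly d/2. Set Z = √(d(1 − a + a²/2)), w = (𝟙_d − a·z)/Z and w' = (𝟙_d − a·z')/Z, where 𝟙_d = (1,…,1) ∈ ℝ^d. Then cos θ(w,w') ≥ 1 − a² > 0, θ(w,w') < π/2, and θ(w,w') ≤ √(18/7)·a. -/

import Mathlib

/-!
For the unit vectors `w, w'` one has `cos θ = ⟪w, w'⟫ = (d (1 - a) + a² |z ∧ z'|) / (d (1 - a + a²/2))`,
which exceeds `1 - a²` by a nonnegative amount. Hence `cos θ > 0` and `θ < π/2`. On `[0, π/2]`,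
concavity of `sin` on `[0, π/4]` gives `cos θ ≤ 1 - (2θ/π)²`, so `θ ≤ (π/2) a ≤ √(18/7) a`.
-/

open Finset
open scoped RealInnerProductSpace

/-- The weight of a binary word `x : Fin d → Bool` is the number of coordinates equal to 1. -/
def weight {d : ℕ} (x : Fin d → Bool) : ℕ := (Finset.univ.filter fun i => x i = true).card

open Real InnerProductGeometry

lemma mul_sin_le_sin_mul {c t : ℝ} (hc₀ : 0 ≤ c) (hc : c ≤ π) (ht₀ : 0 ≤ t) (ht : t ≤ 1) :
    t * sin c ≤ sin (c * t) := by
  simpa [mul_comm c] using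
    strictConcaveOn_sin_Icc.concaveOn.2 ⟨le_rfl, pi_pos.le⟩ ⟨hc₀, hc⟩ (sub_nonneg.2 ht) ht₀
      (by ring)

/-- Sharp at `0` and `π / 2`; the weaker `Real.cos_le_one_sub_mul_cos_sq` would not reach `√(18 / 7)`. -/
lemma cos_le_one_sub_two_div_pi_mul_sq {x : ℝ} (hx₀ : 0 ≤ x) (hx : x ≤ π / 2) :
    cos x ≤ 1 - (2 / π * x) ^ 2 := by
  have hsin : 2 / π * x * (√2 / 2) ≤ sin (x / 2) := by
    have := mul_sin_le_sin_mul (c := π / 4) (t := 2 / π * x) (by positivity) (by linarith [pi_pos])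
      (by positivity) (by rw [div_mul_eq_mul_div, div_le_one pi_pos]; linarith)
    rwa [sin_pi_div_four, show π / 4 * (2 / π * x) = x / 2 by field_simp; ring] at this
  have hsq := pow_le_pow_left₀ (by positivity) hsin 2
  rw [sin_sq_eq_half_sub, show 2 * (x / 2) = x by ring, mul_pow, div_pow,
    sq_sqrt zero_le_two] at hsq
  linarith

lemma le_pi_div_two_mul_of_one_sub_sq_le_cos {a x : ℝ} (ha : 0 ≤ a) (hx₀ : 0 ≤ x)
    (hx : x ≤ π / 2) (h : 1 - a ^ 2 ≤ cos x) : x ≤ π / 2 * a := by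
  have : 2 / π * x ≤ a :=
    pow_le_pow_iff_left₀ (by positivity) ha two_ne_zero |>.1 <| by
      linarith [cos_le_one_sub_two_div_pi_mul_sq hx₀ hx]
  rw [div_mul_eq_mul_div, div_le_iff₀ pi_pos] at this
  linarith

lemma angle_lt_pi_div_two_of_cos_pos {V : Type*} [NormedAddCommGroup V] [InnerProductSpace ℝ V]
    {x y : V} (h : 0 < cos (angle x y)) : angle x y < π / 2 :=
  arccos_lt_pi_div_two.2 (cos_angle x y ▸ h)

lemma pi_div_two_le_sqrt_eighteen_div_seven : π / 2 ≤ √(18 / 7) := by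
  rw [le_sqrt (by positivity) (by norm_num)]
  nlinarith [pi_lt_d2, pi_pos]

section

variable {d : ℕ}

lemma sum_one_sub_mul_one_sub (a : ℝ) (u v : Fin d → Bool) :
    ∑ i, (1 - a * (if u i then (1 : ℝ) else 0)) * (1 - a * (if v i then (1 : ℝ) else 0)) =
      d - a * weight u - a * weight v + a ^ 2 * weight (fun i => u i && v i) := by
  have hterm : ∀ i, (1 - a * (if u i then (1 : ℝ) else 0)) * (1 - a * (if v i then 1 else 0)) =
      1 - a * (if u i then 1 else 0) - a * (if v i then 1 else 0) +
        a ^ 2 * (if (u i && v i) then 1 else 0) := by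
    intro i
    cases u i <;> cases v i <;> simp
    ring
  simp only [hterm, sum_add_distrib, sum_sub_distrib, ← mul_sum, sum_boole, weight, sum_const,
    card_univ, Fintype.card_fin, nsmul_eq_mul, mul_one]

lemma real_inner_eq_sum_mul_div_sq {ι : Type*} [Fintype ι] {x y : ι → ℝ} {Z : ℝ}
    {v v' : EuclideanSpace ℝ ι} (hv : ∀ i, v i = x i / Z) (hv' : ∀ i, v' i = y i / Z) :
    ⟪v, v'⟫ = (∑ i, x i * y i) / Z ^ 2 := by
  simp only [PiLp.inner_apply, RCLike.inner_apply, conj_trivial, hv, hv', sum_div]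
  exact sum_congr rfl fun i _ => by ring

lemma cast_weight_eq_half {z : Fin d → Bool} (hd : Even d) (hz : weight z = d / 2) :
    (weight z : ℝ) = d / 2 := by
  rw [hz, Nat.cast_div_charZero (even_iff_two_dvd.1 hd), Nat.cast_ofNat]

lemma mul_one_sub_add_sq_div_two_pos (hd₀ : 0 < d) (a : ℝ) : 0 < (d : ℝ) * (1 - a + a ^ 2 / 2) :=
  mul_pos (Nat.cast_pos.2 hd₀) (by nlinarith [sq_nonneg (1 - a)])

variable {a Z : ℝ} {z z' : Fin d → Bool} {w w' : EuclideanSpace ℝ (Fin d)}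

lemma norm_eq_one_of_weight_eq_half (hd : Even d) (hd₀ : 0 < d) (hz : weight z = d / 2)
    (hZ : Z = √(d * (1 - a + a ^ 2 / 2)))
    (hw : ∀ i, w i = (1 - a * (if z i then (1 : ℝ) else 0)) / Z) : ‖w‖ = 1 := by
  have hQ := mul_one_sub_add_sq_div_two_pos hd₀ a
  have : ⟪w, w⟫ = 1 := by
    rw [real_inner_eq_sum_mul_div_sq hw hw, sum_one_sub_mul_one_sub, hZ, sq_sqrt hQ.le,
      div_eq_one_iff_eq hQ.ne']
    simp only [Bool.and_self, cast_weight_eq_half hd hz]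
    ring
  rwa [real_inner_self_eq_norm_sq, pow_eq_one_iff_of_nonneg (norm_nonneg w) two_ne_zero] at this

lemma one_sub_sq_le_cos_angle (hd : Even d) (hd₀ : 0 < d) (hz : weight z = d / 2)
    (hz' : weight z' = d / 2) (hZ : Z = √(d * (1 - a + a ^ 2 / 2)))
    (hw : ∀ i, w i = (1 - a * (if z i then (1 : ℝ) else 0)) / Z)
    (hw' : ∀ i, w' i = (1 - a * (if z' i then (1 : ℝ) else 0)) / Z) :
    1 - a ^ 2 ≤ cos (angle w w') := by
  have hQ := mul_one_sub_add_sq_div_two_pos hd₀ a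
  rw [← inner_eq_cos_angle_of_norm_eq_one (norm_eq_one_of_weight_eq_half hd hd₀ hz hZ hw)
      (norm_eq_one_of_weight_eq_half hd hd₀ hz' hZ hw'), real_inner_eq_sum_mul_div_sq hw hw',
    sum_one_sub_mul_one_sub, hZ, sq_sqrt hQ.le, cast_weight_eq_half hd hz,
    cast_weight_eq_half hd hz', le_div_iff₀ hQ]
  -- the slack is `d a² (1 - a)² / 2 + a² |z ∧ z'|`
  nlinarith [mul_nonneg (mul_nonneg (Nat.cast_nonneg d) (sq_nonneg a)) (sq_nonneg (1 - a)),
    mul_nonneg (sq_nonneg a) (Nat.cast_nonneg (α := ℝ) (weight fun i => z i && z' i))]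

end

theorem stmt_6 (d : ℕ) (hd : 2 ≤ d) (hde : Even d) (a : ℝ) (ha : 0 < a) (ha' : a < 1)
    (z z' : Fin d → Bool) (hz : weight z = d / 2) (hz' : weight z' = d / 2)
    (Z : ℝ) (hZ : Z = Real.sqrt ((d : ℝ) * (1 - a + a ^ 2 / 2)))
    (w w' : EuclideanSpace ℝ (Fin d))
    (hw : ∀ i, w i = (1 - a * (if z i then (1 : ℝ) else 0)) / Z)
    (hw' : ∀ i, w' i = (1 - a * (if z' i then (1 : ℝ) else 0)) / Z) :
    (1 - a ^ 2 ≤ Real.cos (InnerProductGeometry.angle w w') ∧ 0 < 1 - a ^ 2) ∧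
    InnerProductGeometry.angle w w' < Real.pi / 2 ∧
    InnerProductGeometry.angle w w' ≤ Real.sqrt (18 / 7) * a := by
  have hcos : 1 - a ^ 2 ≤ cos (angle w w') :=
    one_sub_sq_le_cos_angle hde (by omega) hz hz' hZ hw hw'
  have hpos : 0 < 1 - a ^ 2 := by nlinarith
  have hlt : angle w w' < π / 2 := angle_lt_pi_div_two_of_cos_pos (hpos.trans_le hcos)
  refine ⟨⟨hcos, hpos⟩, hlt, ?_⟩
  calc angle w w' ≤ π / 2 * a :=
        le_pi_div_two_mul_of_one_sub_sq_le_cos ha.le (angle_nonneg w w') hlt.le hcos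
    _ ≤ √(18 / 7) * a := by gcongr; exact pi_div_two_le_sqrt_eighteen_div_seven
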